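/- arXiv:gr-qc/0411081 — 4 statements merged into one kernel-verified Lean document; each statement's English description precedes it below -/
import Mathlib

section
/- Let u : ℝ³ → ℝ³ be a C^∞ vector field satisfying the conformal Killing equation ∂_i u_j(x) + ∂_j u_i(x) = (2/3) δ_{ij} (div u)(x) for all x ∈ ℝ³ and all i, j ∈ {1,2,3}, and suppose u(x) → 0 as |x| → ∞. Then u is identically zero. -/
noncomputable section
open Filter

/-- Partial derivative `∂_i f` in `ℝ³`. -/
def pd3 (i : Fin 3) (f : EuclideanSpace ℝ (Fin 3) → ℝ) (x : EuclideanSpace ℝ (Fin 3)) : ℝ :=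
  fderiv ℝ f x (EuclideanSpace.single i 1)

/-- Divergence of a vector field on `ℝ³`. -/
def divv (u : EuclideanSpace ℝ (Fin 3) → EuclideanSpace ℝ (Fin 3))
    (x : EuclideanSpace ℝ (Fin 3)) : ℝ :=
  ∑ k : Fin 3, pd3 k (fun y => u y k) x

namespace StmtAux

abbrev E3 := EuclideanSpace ℝ (Fin 3)

/-- Kronecker delta. -/
def dd (i j : Fin 3) : ℝ := if i = j then 1 else 0

lemma pd3_smooth {f : E3 → ℝ} (hf : ContDiff ℝ (⊤ : ℕ∞) f) (i : Fin 3) : ContDiff ℝ (⊤ : ℕ∞) (pd3 i f) :=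
  (hf.fderiv_right (by simp)).clm_apply contDiff_const

lemma pd3_pd3 {f : E3 → ℝ} (hf : ContDiff ℝ (⊤ : ℕ∞) f) (i j : Fin 3) (x : E3) :
    pd3 i (pd3 j f) x
      = fderiv ℝ (fderiv ℝ f) x (EuclideanSpace.single i 1) (EuclideanSpace.single j 1) := by
  have hd : DifferentiableAt ℝ (fderiv ℝ f) x :=
    ((hf.fderiv_right (m := (⊤ : ℕ∞)) (by simp)).differentiable (by simp)) x
  unfold pd3
  rw [fderiv_clm_apply hd (differentiableAt_const _)]
  simp

lemma pd3_comm {f : E3 → ℝ} (hf : ContDiff ℝ (⊤ : ℕ∞) f) (i j : Fin 3) (x : E3) :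
    pd3 i (pd3 j f) x = pd3 j (pd3 i f) x := by
  rw [pd3_pd3 hf, pd3_pd3 hf]
  exact (hf.contDiffAt.isSymmSndFDerivAt (by rw [minSmoothness_of_isRCLikeNormedField]; exact WithTop.coe_le_coe.2 le_top)) _ _

lemma pd3_add {f g : E3 → ℝ} {x : E3} (hf : DifferentiableAt ℝ f x) (hg : DifferentiableAt ℝ g x)
    (i : Fin 3) : pd3 i (fun y => f y + g y) x = pd3 i f x + pd3 i g x := by
  unfold pd3; rw [fderiv_fun_add hf hg]; rfl

lemma pd3_sub {f g : E3 → ℝ} {x : E3} (hf : DifferentiableAt ℝ f x) (hg : DifferentiableAt ℝ g x)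
    (i : Fin 3) : pd3 i (fun y => f y - g y) x = pd3 i f x - pd3 i g x := by
  unfold pd3; rw [fderiv_fun_sub hf hg]; rfl

lemma pd3_const_mul {f : E3 → ℝ} {x : E3} (hf : DifferentiableAt ℝ f x) (c : ℝ)
    (i : Fin 3) : pd3 i (fun y => c * f y) x = c * pd3 i f x := by
  unfold pd3; rw [fderiv_const_mul hf]; rfl

lemma pd3_const (c : ℝ) (i : Fin 3) (x : E3) : pd3 i (fun _ => c) x = 0 := by
  unfold pd3; rw [fderiv_fun_const]; rfl

lemma pd3_sum {ι : Type*} (s : Finset ι) {f : ι → E3 → ℝ} {x : E3}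
    (hf : ∀ k ∈ s, DifferentiableAt ℝ (f k) x) (i : Fin 3) :
    pd3 i (fun y => ∑ k ∈ s, f k y) x = ∑ k ∈ s, pd3 i (f k) x := by
  unfold pd3; rw [fderiv_fun_sum hf]; simp

lemma fderiv_expand {f : E3 → ℝ} {x : E3} (v : E3) :
    fderiv ℝ f x v = ∑ i : Fin 3, v i * pd3 i f x := by
  have hv : v = ∑ i : Fin 3, v i • EuclideanSpace.single i 1 := by
    ext j
    have : ∀ (w : Finset (Fin 3)),
        ((∑ i ∈ w, v i • EuclideanSpace.single i 1 : E3) j)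
          = ∑ i ∈ w, (v i • EuclideanSpace.single i 1 : E3) j := by
      intro w
      induction w using Finset.induction with
      | empty => rfl
      | @insert _ _ h ih => rw [Finset.sum_insert h, Finset.sum_insert h, ← ih]; rfl
    rw [this]
    simp [EuclideanSpace.single_apply]
  conv_lhs => rw [hv]
  rw [map_sum]
  simp [pd3, mul_comm]

/-- The key algebraic lemma: a symmetric 3×3 matrix satisfying the conformal-Killing
compatibility relation vanishes. -/
lemma H_zero (H : Fin 3 → Fin 3 → ℝ) (hsymm : ∀ a b, H a b = H b a)
    (hrel : ∀ l i j k : Fin 3,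
      dd j k * H l i + dd i k * H l j - dd i j * H l k
        = dd j k * H i l + dd l k * H i j - dd l j * H i k) :
    ∀ a b, H a b = 0 := by
  have hoff : ∀ l j i : Fin 3, i ≠ l → i ≠ j → l ≠ j → H l j = 0 := by
    intro l j i h1 h2 h3
    have h := hrel l i j i
    simp [dd, h1, h2, h3, Ne.symm h1, Ne.symm h2, Ne.symm h3, hsymm l i] at h
    linarith [hsymm l j, h]
  have hdiag : ∀ i j : Fin 3, i ≠ j → H j j = - H i i := by
    intro i j hij
    have h := hrel j i j i
    simp [dd, hij, Ne.symm hij, hsymm j i] at h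
    linarith [h]
  intro a b
  have d01 := hdiag 0 1 (by decide)
  have d02 := hdiag 0 2 (by decide)
  have d12 := hdiag 1 2 (by decide)
  fin_cases a <;> fin_cases b
  · show H 0 0 = 0; linarith
  · exact hoff 0 1 2 (by decide) (by decide) (by decide)
  · exact hoff 0 2 1 (by decide) (by decide) (by decide)
  · exact hoff 1 0 2 (by decide) (by decide) (by decide)
  · show H 1 1 = 0; linarith
  · exact hoff 1 2 0 (by decide) (by decide) (by decide)
  · exact hoff 2 0 1 (by decide) (by decide) (by decide)
  · exact hoff 2 1 0 (by decide) (by decide) (by decide)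
  · show H 2 2 = 0; linarith

end StmtAux

namespace StmtAux

variable {u : E3 → E3}

def uc (u : E3 → E3) (k : Fin 3) : E3 → ℝ := fun y => u y k
def P (u : E3 → E3) (i : Fin 3) : E3 → ℝ := pd3 i (divv u)
def T (u : E3 → E3) (i j k : Fin 3) : E3 → ℝ := pd3 i (pd3 j (uc u k))
def Hm (u : E3 → E3) (l i : Fin 3) : E3 → ℝ := pd3 l (P u i)

lemma uc_smooth (hu : ContDiff ℝ (⊤ : ℕ∞) u) (k : Fin 3) : ContDiff ℝ (⊤ : ℕ∞) (uc u k) :=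
  (EuclideanSpace.proj (𝕜 := ℝ) k).contDiff.comp hu

lemma divv_smooth (hu : ContDiff ℝ (⊤ : ℕ∞) u) : ContDiff ℝ (⊤ : ℕ∞) (divv u) := by
  have : divv u = fun x => ∑ k : Fin 3, pd3 k (uc u k) x := rfl
  rw [this]
  exact ContDiff.sum fun k _ => pd3_smooth (uc_smooth hu k) k

lemma P_smooth (hu : ContDiff ℝ (⊤ : ℕ∞) u) (i : Fin 3) : ContDiff ℝ (⊤ : ℕ∞) (P u i) :=
  pd3_smooth (divv_smooth hu) i

variable (hu : ContDiff ℝ (⊤ : ℕ∞) u)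
variable (hCK : ∀ (x : E3) (i j : Fin 3),
      pd3 i (fun y => u y j) x + pd3 j (fun y => u y i) x =
        (2 / 3) * (if i = j then divv u x else 0))
include hu hCK

lemma hT1 (i j k : Fin 3) (x : E3) :
    T u i j k x + T u i k j x = 2/3 * (dd j k * P u i x) := by
  have he : (fun y => pd3 j (uc u k) y + pd3 k (uc u j) y)
      = (fun y => (2/3) * (if j = k then divv u y else 0)) := funext fun y => hCK y j k
  have hL : pd3 i (fun y => pd3 j (uc u k) y + pd3 k (uc u j) y) x
      = T u i j k x + T u i k j x :=
    pd3_add ((pd3_smooth (uc_smooth hu k) j).differentiable (by simp) x)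
      ((pd3_smooth (uc_smooth hu j) k).differentiable (by simp) x) i
  rw [← hL, he]
  by_cases hjk : j = k
  · simp only [if_pos hjk]
    rw [pd3_const_mul ((divv_smooth hu).differentiable (by simp) x)]
    simp [dd, hjk, P]
  · simp only [if_neg hjk, mul_zero]
    rw [pd3_const]
    simp [dd, hjk]

lemma hTsymm (i j k : Fin 3) (x : E3) : T u i j k x = T u j i k x :=
  pd3_comm (uc_smooth hu k) i j x

lemma hT (i j k : Fin 3) (x : E3) :
    T u i j k x = 1/3 * (dd j k * P u i x + dd i k * P u j x - dd i j * P u k x) := by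
  have h1 := hT1 hu hCK i j k x
  have h2 := hT1 hu hCK j i k x
  have h3 := hT1 hu hCK k i j x
  have s1 := hTsymm hu hCK i k j x
  have s2 := hTsymm hu hCK j k i x
  have s3 := hTsymm hu hCK j i k x
  linarith

lemma hT3 (l i j k : Fin 3) (x : E3) :
    pd3 l (T u i j k) x
      = 1/3 * (dd j k * Hm u l i x + dd i k * Hm u l j x - dd i j * Hm u l k x) := by
  have he : T u i j k
      = fun y => 1/3 * (dd j k * P u i y + dd i k * P u j y - dd i j * P u k y) :=
    funext (hT hu hCK i j k)
  have hdP : ∀ a : Fin 3, DifferentiableAt ℝ (fun y => dd a a * P u a y) x := fun a =>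
    (contDiff_const.mul (P_smooth hu a)).differentiable (by simp) x
  have d1 : DifferentiableAt ℝ (fun y => dd j k * P u i y) x :=
    (contDiff_const.mul (P_smooth hu i)).differentiable (by simp) x
  have d2 : DifferentiableAt ℝ (fun y => dd i k * P u j y) x :=
    (contDiff_const.mul (P_smooth hu j)).differentiable (by simp) x
  have d3 : DifferentiableAt ℝ (fun y => dd i j * P u k y) x :=
    (contDiff_const.mul (P_smooth hu k)).differentiable (by simp) x
  rw [he, pd3_const_mul ((d1.fun_add d2).fun_sub d3), pd3_sub (d1.fun_add d2) d3, pd3_add d1 d2,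
    pd3_const_mul ((P_smooth hu i).differentiable (by simp) x),
    pd3_const_mul ((P_smooth hu j).differentiable (by simp) x),
    pd3_const_mul ((P_smooth hu k).differentiable (by simp) x)]
  rfl

lemma Hm_zero (l i : Fin 3) (x : E3) : Hm u l i x = 0 := by
  refine H_zero (fun a b => Hm u a b x) (fun a b => pd3_comm (divv_smooth hu) a b x) ?_ l i
  intro l' i' j' k'
  have hcomm : pd3 l' (T u i' j' k') x = pd3 i' (T u l' j' k') x :=
    pd3_comm (pd3_smooth (uc_smooth hu k') j') l' i' x
  have e1 := hT3 hu hCK l' i' j' k' x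
  have e2 := hT3 hu hCK i' l' j' k' x
  rw [e1, e2] at hcomm
  linarith

lemma T3_zero (l i j k : Fin 3) (x : E3) : pd3 l (T u i j k) x = 0 := by
  rw [hT3 hu hCK]
  simp [Hm_zero hu hCK]

end StmtAux

namespace StmtAux

def Dv (v : E3) (F : E3 → ℝ) : E3 → ℝ := fun x => ∑ i : Fin 3, v i * pd3 i F x

lemma Dv_smooth {F : E3 → ℝ} (hF : ContDiff ℝ (⊤ : ℕ∞) F) (v : E3) : ContDiff ℝ (⊤ : ℕ∞) (Dv v F) :=
  ContDiff.sum fun i _ => contDiff_const.mul (pd3_smooth hF i)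

lemma pd3_Dv {F : E3 → ℝ} (hF : ContDiff ℝ (⊤ : ℕ∞) F) (v : E3) (a : Fin 3) (x : E3) :
    pd3 a (Dv v F) x = ∑ b : Fin 3, v b * pd3 a (pd3 b F) x := by
  unfold Dv
  rw [pd3_sum Finset.univ
    (fun b _ => (contDiff_const.mul (pd3_smooth hF b)).differentiable (by simp) x) a]
  exact Finset.sum_congr rfl fun b _ =>
    pd3_const_mul ((pd3_smooth hF b).differentiable (by simp) x) (v b) a

lemma hasDerivAt_line {F : E3 → ℝ} (hF : ContDiff ℝ (⊤ : ℕ∞) F) (v : E3) (t : ℝ) :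
    HasDerivAt (fun s : ℝ => F (s • v)) (Dv v F (t • v)) t := by
  have h1 : HasDerivAt (fun s : ℝ => s • v) v t := by
    simpa using (hasDerivAt_id t).smul_const v
  have h2 := ((hF.differentiable (by simp)) (t • v)).hasFDerivAt
  have h3 := h2.comp_hasDerivAt t h1
  rw [show Dv v F (t • v) = fderiv ℝ F (t • v) v from (fderiv_expand v).symm]
  simpa [Function.comp_def] using h3

end StmtAux

namespace StmtAux

variable {u : E3 → E3}
variable (hu : ContDiff ℝ (⊤ : ℕ∞) u)
variable (hCK : ∀ (x : E3) (i j : Fin 3),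
      pd3 i (fun y => u y j) x + pd3 j (fun y => u y i) x =
        (2 / 3) * (if i = j then divv u x else 0))
include hu hCK

lemma Dv3_zero (v : E3) (k : Fin 3) (x : E3) :
    Dv v (Dv v (Dv v (uc u k))) x = 0 := by
  set F := uc u k with hF
  have hFs : ContDiff ℝ (⊤ : ℕ∞) F := uc_smooth hu k
  -- second level: pd3 c (pd3 b (Dv v F)) x = 0 would be false; third derivatives though:
  have key : ∀ (c b : Fin 3) (y : E3), pd3 c (pd3 b (Dv v F)) y = 0 := by
    intro c b y
    have he : pd3 b (Dv v F) = fun z => ∑ a : Fin 3, v a * pd3 b (pd3 a F) z :=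
      funext fun z => pd3_Dv hFs v b z
    rw [he, pd3_sum Finset.univ
      (fun a _ => (contDiff_const.mul (pd3_smooth (pd3_smooth hFs a) b)).differentiable (by simp) y) c]
    refine Finset.sum_eq_zero fun a _ => ?_
    rw [pd3_const_mul ((pd3_smooth (pd3_smooth hFs a) b).differentiable (by simp) y) (v a) c]
    have : pd3 c (pd3 b (pd3 a F)) y = pd3 c (T u b a k) y := rfl
    rw [this, T3_zero hu hCK]
    ring
  have h2 : ∀ c : Fin 3, pd3 c (Dv v (Dv v F)) x = 0 := by
    intro c
    rw [pd3_Dv (Dv_smooth hFs v) v c x]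
    refine Finset.sum_eq_zero fun b _ => ?_
    rw [key c b x]
    ring
  show ∑ c : Fin 3, v c * pd3 c (Dv v (Dv v F)) x = 0
  refine Finset.sum_eq_zero fun c _ => ?_
  rw [h2 c]
  ring

end StmtAux

namespace StmtAux

variable {u : E3 → E3}
variable (hu : ContDiff ℝ (⊤ : ℕ∞) u)
variable (hCK : ∀ (x : E3) (i j : Fin 3),
      pd3 i (fun y => u y j) x + pd3 j (fun y => u y i) x =
        (2 / 3) * (if i = j then divv u x else 0))
variable (hdecay : Tendsto u (cocompact E3) (nhds 0))
include hu hCK hdecay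

lemma line_zero (v : E3) (hv : v ≠ 0) (k : Fin 3) (t : ℝ) : u (t • v) k = 0 := by
  set F := uc u k with hFdef
  have hFs : ContDiff ℝ (⊤ : ℕ∞) F := uc_smooth hu k
  set g0 : ℝ → ℝ := fun s => F (s • v) with hg0def
  set g1 : ℝ → ℝ := fun s => Dv v F (s • v) with hg1def
  set g2 : ℝ → ℝ := fun s => Dv v (Dv v F) (s • v) with hg2def
  have hd0 : ∀ s, HasDerivAt g0 (g1 s) s := fun s => hasDerivAt_line hFs v s
  have hd1 : ∀ s, HasDerivAt g1 (g2 s) s := fun s => hasDerivAt_line (Dv_smooth hFs v) v s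
  have hd2 : ∀ s, HasDerivAt g2 0 s := by
    intro s
    have := hasDerivAt_line (Dv_smooth (Dv_smooth hFs v) v) v s
    rwa [Dv3_zero hu hCK v k (s • v)] at this
  set c : ℝ := g2 0 with hcdef
  set b : ℝ := g1 0 with hbdef
  set a : ℝ := g0 0 with hadef
  have hg2 : ∀ s, g2 s = c := fun s =>
    is_const_of_deriv_eq_zero (fun y => (hd2 y).differentiableAt) (fun y => (hd2 y).deriv) s 0
  have hg1 : ∀ s, g1 s = b + c * s := by
    intro s
    have hφ : ∀ y : ℝ, HasDerivAt (fun s => g1 s - (b + c * s)) 0 y := by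
      intro y
      have h1 : HasDerivAt (fun s : ℝ => b + c * s) c y := by
        exact ((hasDerivAt_const y b).add ((hasDerivAt_id y).const_mul c)).congr_deriv (by ring)
      have := (hd1 y).sub h1
      rwa [hg2 y, sub_self] at this
    have := is_const_of_deriv_eq_zero (fun y => (hφ y).differentiableAt)
      (fun y => (hφ y).deriv) s 0
    have h0 : g1 0 - (b + c * 0) = 0 := by simp [hbdef]
    rw [h0] at this  -- this : g1 s - (b + c*s) = 0
    linarith
  have hg0 : ∀ s, g0 s = a + b * s + c * (s ^ 2 / 2) := by
    intro s
    have hφ : ∀ y : ℝ, HasDerivAt (fun s => g0 s - (a + b * s + c * (s ^ 2 / 2))) 0 y := by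
      intro y
      have h1 : HasDerivAt (fun s : ℝ => a + b * s + c * (s ^ 2 / 2)) (b + c * y) y := by
        have hq : HasDerivAt (fun s : ℝ => s ^ 2 / 2) y y := by
          simpa using ((hasDerivAt_pow 2 y).div_const 2)
        exact (((hasDerivAt_const y a).add ((hasDerivAt_id y).const_mul b)).add
          (hq.const_mul c)).congr_deriv (by ring)
      have := (hd0 y).sub h1
      rwa [hg1 y, sub_self] at this
    have := is_const_of_deriv_eq_zero (fun y => (hφ y).differentiableAt)
      (fun y => (hφ y).deriv) s 0
    have h0 : g0 0 - (a + b * 0 + c * (0 ^ 2 / 2)) = 0 := by simp [hadef]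
    rw [h0] at this
    linarith
  -- limit of g0 at infinity is 0
  have htend : Tendsto g0 atTop (nhds 0) := by
    have hn : Tendsto (fun s : ℝ => s • v) atTop (cocompact E3) := by
      rw [← Metric.cobounded_eq_cocompact, ← comap_norm_atTop, tendsto_comap_iff]
      have he : (norm ∘ fun s : ℝ => s • v) = fun s : ℝ => |s| * ‖v‖ :=
        funext fun s => by simp [norm_smul]
      rw [he]
      exact tendsto_abs_atTop_atTop.atTop_mul_const (norm_pos_iff.2 hv)
    have h2 := hdecay.comp hn
    have h3 := ((EuclideanSpace.proj (𝕜 := ℝ) k).continuous.tendsto 0).comp h2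
    simpa [hg0def, hFdef, uc, Function.comp_def] using h3
  have hc : c = 0 := by
    have l1 : Tendsto (fun s => g0 s * (s⁻¹ * s⁻¹)) atTop (nhds 0) := by
      simpa using htend.mul (tendsto_inv_atTop_zero.mul tendsto_inv_atTop_zero)
    have l2 : Tendsto (fun s : ℝ => a * (s⁻¹ * s⁻¹) + b * s⁻¹ + c / 2) atTop (nhds (c / 2)) := by
      have := ((tendsto_const_nhds (x := a) (f := atTop (α := ℝ))).mul
        (tendsto_inv_atTop_zero.mul tendsto_inv_atTop_zero)).add
        ((tendsto_const_nhds (x := b) (f := atTop (α := ℝ))).mul tendsto_inv_atTop_zero) |>.add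
        (tendsto_const_nhds (x := c / 2) (f := atTop (α := ℝ)))
      simpa using this
    have leq : (fun s => g0 s * (s⁻¹ * s⁻¹))
        =ᶠ[atTop] fun s : ℝ => a * (s⁻¹ * s⁻¹) + b * s⁻¹ + c / 2 := by
      filter_upwards [eventually_ge_atTop (1 : ℝ)] with s hs
      have hs0 : s ≠ 0 := by intro h; rw [h] at hs; linarith
      rw [hg0 s]
      field_simp
    have := tendsto_nhds_unique (l1.congr' leq) l2
    linarith
  have hb : b = 0 := by
    have l1 : Tendsto (fun s => g0 s * s⁻¹) atTop (nhds 0) := by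
      simpa using htend.mul tendsto_inv_atTop_zero
    have l2 : Tendsto (fun s : ℝ => a * s⁻¹ + b) atTop (nhds b) := by
      have := ((tendsto_const_nhds (x := a) (f := atTop (α := ℝ))).mul
        tendsto_inv_atTop_zero).add (tendsto_const_nhds (x := b) (f := atTop (α := ℝ)))
      simpa using this
    have leq : (fun s => g0 s * s⁻¹) =ᶠ[atTop] fun s : ℝ => a * s⁻¹ + b := by
      filter_upwards [eventually_ge_atTop (1 : ℝ)] with s hs
      have hs0 : s ≠ 0 := by intro h; rw [h] at hs; linarith
      rw [hg0 s, hc]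
      field_simp
      ring
    have := tendsto_nhds_unique (l1.congr' leq) l2
    linarith
  have ha : a = 0 := by
    have l2 : Tendsto g0 atTop (nhds a) := by
      have : g0 =ᶠ[atTop] fun _ => a := by
        filter_upwards with s
        rw [hg0 s, hc, hb]; ring
      exact tendsto_const_nhds.congr' this.symm
    exact (tendsto_nhds_unique l2 htend)
  have : g0 t = 0 := by rw [hg0 t, ha, hb, hc]; ring
  simpa [hg0def, hFdef, uc] using this

end StmtAux

/-- A smooth conformal Killing vector field on flat `ℝ³` that tends to zero at infinity
is identically zero. -/
theorem stmt_16 (u : EuclideanSpace ℝ (Fin 3) → EuclideanSpace ℝ (Fin 3))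
    (hu : ContDiff ℝ (⊤ : ℕ∞) u)
    (hConfKilling : ∀ (x : EuclideanSpace ℝ (Fin 3)) (i j : Fin 3),
      pd3 i (fun y => u y j) x + pd3 j (fun y => u y i) x =
        (2 / 3) * (if i = j then divv u x else 0))
    (hdecay : Tendsto u (cocompact (EuclideanSpace ℝ (Fin 3))) (nhds 0)) :
    ∀ x : EuclideanSpace ℝ (Fin 3), u x = 0 := by
  intro x
  ext k
  show u x k = (0 : StmtAux.E3) k
  have h0 : ((0 : StmtAux.E3) k) = 0 := rfl
  rw [h0]
  by_cases hx : x = 0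
  · subst hx
    have hv : (EuclideanSpace.single (0 : Fin 3) (1 : ℝ) : StmtAux.E3) ≠ 0 := by
      intro h
      have := congrArg (fun w : StmtAux.E3 => w 0) h
      simp [EuclideanSpace.single_apply] at this
    have := StmtAux.line_zero hu hConfKilling hdecay _ hv k 0
    simpa [zero_smul] using this
  · have := StmtAux.line_zero hu hConfKilling hdecay x hx k 1
    simpa [one_smul] using this
end
end

section
/- Let f : ℂ → ℂ be holomorphic on the open unit disk D = {z : |z| < 1} and continuous on the closed disk D̄, and define w(z) = f(z)·(1 − z·conj(z)). Then w is C^∞ (as a function of the two real variables) on D, it satisfies ∂̄(∂̄ w) = 0 at every point of D, and w(z) = 0 for every z with |z| = 1. -/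
noncomputable section
open Metric

/-- The Wirtinger derivative `∂̄ w` of a function `w : ℂ → ℂ`, defined via the real
Fréchet derivative: `(∂̄ w)(z) = (1/2)(Dw(z)(1) + i · Dw(z)(i))`. -/
def wirtingerBar (w : ℂ → ℂ) (z : ℂ) : ℂ :=
  (1 / 2) * (fderiv ℝ w z 1 + Complex.I * fderiv ℝ w z Complex.I)

lemma wirtingerBar_eq_zero_of_diff {g : ℂ → ℂ} {z : ℂ} (hg : DifferentiableAt ℂ g z) :
    wirtingerBar g z = 0 := by
  have h := (hg.hasFDerivAt).restrictScalars ℝ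
  rw [wirtingerBar, h.fderiv]
  set L := fderiv ℂ g z with hL
  have h1 : L Complex.I = Complex.I * L 1 := by
    have := L.map_smul Complex.I 1
    simpa [smul_eq_mul] using this
  simp only [ContinuousLinearMap.coe_restrictScalars', h1]
  rw [← mul_assoc, Complex.I_mul_I]
  ring

lemma wirtingerBar_congr {g h : ℂ → ℂ} {z : ℂ} (he : g =ᶠ[nhds z] h) :
    wirtingerBar g z = wirtingerBar h z := by
  unfold wirtingerBar
  rw [he.fderiv_eq]

lemma wirtingerBar_eq {w : ℂ → ℂ} {z : ℂ} {f : ℂ → ℂ}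
    (hfz : DifferentiableAt ℂ f z)
    (hw : w = fun z => f z * (1 - z * starRingEnd ℂ z)) :
    wirtingerBar w z = -(z * f z) := by
  have hu : HasFDerivAt (fun z : ℂ => (1 : ℂ) - z * starRingEnd ℂ z)
      (-(z • (Complex.conjCLE : ℂ →L[ℝ] ℂ) +
        (starRingEnd ℂ z) • ContinuousLinearMap.id ℝ ℂ)) z := by
    have h1 : HasFDerivAt (fun z : ℂ => z * starRingEnd ℂ z)
        (z • (Complex.conjCLE : ℂ →L[ℝ] ℂ) +
         (starRingEnd ℂ z) • ContinuousLinearMap.id ℝ ℂ) z :=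
      (hasFDerivAt_id z).mul Complex.conjCLE.hasFDerivAt
    exact h1.const_sub 1
  have hF : HasFDerivAt f ((fderiv ℂ f z).restrictScalars ℝ) z :=
    hfz.hasFDerivAt.restrictScalars ℝ
  have hD : HasFDerivAt w
      (f z • (-(z • (Complex.conjCLE : ℂ →L[ℝ] ℂ) +
        (starRingEnd ℂ z) • ContinuousLinearMap.id ℝ ℂ)) +
       (1 - z * starRingEnd ℂ z) • ((fderiv ℂ f z).restrictScalars ℝ)) z := by
    rw [hw]; exact hF.mul hu
  rw [wirtingerBar, hD.fderiv]
  set L := fderiv ℂ f z with hL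
  have h1 : L Complex.I = Complex.I * L 1 := by
    have := L.map_smul Complex.I 1
    simpa [smul_eq_mul] using this
  simp only [ContinuousLinearMap.add_apply, ContinuousLinearMap.smul_apply,
    ContinuousLinearMap.neg_apply, ContinuousLinearMap.coe_restrictScalars',
    ContinuousLinearMap.id_apply, ContinuousLinearEquiv.coe_coe,
    Complex.conjCLE_apply, map_one, Complex.conj_I, h1, smul_eq_mul]
  have hI : Complex.I * Complex.I = -1 := Complex.I_mul_I
  ring_nf
  rw [Complex.I_sq]
  ring

/-- If `f` is holomorphic on the open unit disk and continuous on the closed disk, then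
`w(z) = f(z)(1 − z z̄)` is smooth on the open disk, satisfies `∂̄² w = 0` there, and
vanishes on the unit circle. -/
theorem stmt_17 (f : ℂ → ℂ)
    (hf : DifferentiableOn ℂ f (ball (0 : ℂ) 1))
    (hfc : ContinuousOn f (closedBall (0 : ℂ) 1))
    (w : ℂ → ℂ) (hw : w = fun z => f z * (1 - z * starRingEnd ℂ z)) :
    ContDiffOn ℝ (⊤ : ℕ∞) w (ball (0 : ℂ) 1) ∧
    (∀ z ∈ ball (0 : ℂ) 1, wirtingerBar (wirtingerBar w) z = 0) ∧
    (∀ z : ℂ, ‖z‖ = 1 → w z = 0) := by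
  have hball : IsOpen (ball (0 : ℂ) 1) := isOpen_ball
  refine ⟨?_, ?_, ?_⟩
  · rw [hw]
    have hfs : ContDiffOn ℝ (⊤ : ℕ∞) f (ball (0 : ℂ) 1) :=
      (hf.contDiffOn hball).restrict_scalars ℝ
    have hg : ContDiff ℝ (⊤ : ℕ∞) (fun z : ℂ => (1 : ℂ) - z * starRingEnd ℂ z) :=
      contDiff_const.sub (contDiff_id.mul Complex.conjCLE.contDiff)
    exact hfs.mul hg.contDiffOn
  · intro z hz
    have heq : ∀ x ∈ ball (0 : ℂ) 1, wirtingerBar w x = -(x * f x) := fun x hx =>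
      wirtingerBar_eq (hf.differentiableAt (hball.mem_nhds hx)) hw
    have hev : wirtingerBar w =ᶠ[nhds z] (fun x => -(x * f x)) :=
      Filter.eventuallyEq_of_mem (hball.mem_nhds hz) heq
    have hdg : DifferentiableAt ℂ (fun x : ℂ => -(x * f x)) z :=
      (differentiableAt_id.mul (hf.differentiableAt (hball.mem_nhds hz))).neg
    rw [wirtingerBar_congr hev]
    exact wirtingerBar_eq_zero_of_diff hdg
  · intro z hz
    rw [hw]
    simp only [Complex.mul_conj]
    rw [Complex.normSq_eq_norm_sq, hz]
    norm_num
end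
end

section
/- The complex vector space of functions w : ℂ → ℂ that are continuous on the closed unit disk D̄ = {z : |z| ≤ 1}, C^∞ on the open unit disk D, satisfy ∂̄(∂̄ w) = 0 at every point of D, and vanish on the unit circle {z : |z| = 1}, is not finite-dimensional. -/
noncomputable section
open Metric

lemma wb_holo {w : ℂ → ℂ} {z : ℂ} (h : DifferentiableAt ℂ w z) :
    wirtingerBar w z = 0 := by
  have h' := (h.hasFDerivAt).restrictScalars ℝ
  rw [wirtingerBar, h'.fderiv]
  have hI : (fderiv ℂ w z) Complex.I = Complex.I * (fderiv ℂ w z) 1 := by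
    simpa [smul_eq_mul] using (fderiv ℂ w z).map_smul Complex.I (1 : ℂ)
  simp only [ContinuousLinearMap.coe_restrictScalars', hI]
  ring_nf
  simp [Complex.I_sq]

def fn (n : ℕ) (z : ℂ) : ℂ := z ^ n * (1 - z * (starRingEnd ℂ) z)

lemma hasFDeriv_fn (n : ℕ) (z : ℂ) :
    HasFDerivAt (fn n)
      ((z ^ n • ((0 : ℂ →L[ℝ] ℂ) -
          (z • (Complex.conjCLE : ℂ ≃L[ℝ] ℂ).toContinuousLinearMap +
            (starRingEnd ℂ) z • ContinuousLinearMap.id ℝ ℂ)) +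
        (1 - z * (starRingEnd ℂ) z) •
          ((ContinuousLinearMap.smulRight (1 : ℂ →L[ℂ] ℂ) ((n : ℂ) * z ^ (n - 1))).restrictScalars ℝ))) z := by
  have hp : HasFDerivAt (fun z : ℂ => z ^ n)
      ((ContinuousLinearMap.smulRight (1 : ℂ →L[ℂ] ℂ) ((n : ℂ) * z ^ (n - 1))).restrictScalars ℝ) z :=
    ((hasDerivAt_pow n z).hasFDerivAt).restrictScalars ℝ
  have hconj : HasFDerivAt (starRingEnd ℂ)
      (Complex.conjCLE : ℂ ≃L[ℝ] ℂ).toContinuousLinearMap z :=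
    Complex.conjCLE.toContinuousLinearMap.hasFDerivAt
  have hid : HasFDerivAt (fun z : ℂ => z) (ContinuousLinearMap.id ℝ ℂ) z := hasFDerivAt_id z
  have hmul := hid.mul hconj
  have hsub := (hasFDerivAt_const (1 : ℂ) z).sub hmul
  exact hp.mul hsub

lemma wb_fn (n : ℕ) (z : ℂ) : wirtingerBar (fn n) z = -z ^ (n + 1) := by
  rw [wirtingerBar, (hasFDeriv_fn n z).fderiv]
  simp only [ContinuousLinearMap.add_apply, ContinuousLinearMap.smul_apply,
    ContinuousLinearMap.sub_apply, ContinuousLinearMap.zero_apply,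
    ContinuousLinearMap.id_apply, ContinuousLinearMap.coe_restrictScalars',
    ContinuousLinearMap.smulRight_apply, ContinuousLinearMap.one_apply,
    ContinuousLinearEquiv.coe_coe, Complex.conjCLE_apply, map_one, Complex.conj_I,
    smul_eq_mul]
  have hc : ∀ x : ℂ, (LinearMap.toContinuousLinearMap (↑↑Complex.conjCLE : ℂ →ₗ[ℝ] ℂ)) x = (starRingEnd ℂ) x := fun x => rfl
  try simp only [hc, map_one, Complex.conj_I]
  ring_nf
  rw [Complex.I_sq]
  ring

lemma contDiff_fn (n : ℕ) : ContDiff ℝ (⊤ : ℕ∞) (fn n) := by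
  have hconj : ContDiff ℝ (⊤ : ℕ∞) (fun z : ℂ => (starRingEnd ℂ) z) :=
    Complex.conjCLE.toContinuousLinearMap.contDiff
  exact (contDiff_id.pow n).mul (contDiff_const.sub (contDiff_id.mul hconj))

lemma mem_fn (n : ℕ) : fn n ∈ {w : ℂ → ℂ |
    ContinuousOn w (closedBall (0 : ℂ) 1) ∧
    ContDiffOn ℝ (⊤ : ℕ∞) w (ball (0 : ℂ) 1) ∧
    (∀ z ∈ ball (0 : ℂ) 1, wirtingerBar (wirtingerBar w) z = 0) ∧
    (∀ z : ℂ, ‖z‖ = 1 → w z = 0)} := by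
  refine ⟨((contDiff_fn n).continuous).continuousOn, (contDiff_fn n).contDiffOn, ?_, ?_⟩
  · intro z _
    have h1 : wirtingerBar (fn n) = fun z => -z ^ (n + 1) := funext (wb_fn n)
    rw [h1]
    exact wb_holo ((differentiable_pow (n + 1)).neg.differentiableAt)
  · intro z hz
    have : z * (starRingEnd ℂ) z = 1 := by
      rw [Complex.mul_conj]
      norm_cast
      rw [Complex.normSq_eq_norm_sq, hz, one_pow]
    simp [fn, this]

lemma linIndep_fn : LinearIndependent ℂ fn := by
  rw [linearIndependent_iff']
  intro s g hsum i hi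
  set P : Polynomial ℂ := ∑ j ∈ s, Polynomial.C (g j) * Polynomial.X ^ j with hP
  have heval : ∀ z : ℂ, P.eval z * (1 - z * (starRingEnd ℂ) z) = 0 := by
    intro z
    have h0 := congrFun hsum z
    simp only [Finset.sum_apply, Pi.smul_apply, smul_eq_mul, Pi.zero_apply, fn] at h0
    rw [hP]
    simp only [Polynomial.eval_finset_sum, Polynomial.eval_mul, Polynomial.eval_C,
      Polynomial.eval_pow, Polynomial.eval_X, Finset.sum_mul]
    rw [← h0]
    apply Finset.sum_congr rfl
    intro j _
    ring
  have hPz : P = 0 := by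
    apply P.eq_zero_of_infinite_isRoot
    refine Set.infinite_of_injective_forall_mem
      (f := fun k : ℕ => (((k : ℝ) + 2)⁻¹ : ℝ) * (1 : ℂ)) ?_ ?_
    · intro a b hab
      have h1 : ((a : ℝ) + 2)⁻¹ = ((b : ℝ) + 2)⁻¹ := by
        simpa [Complex.ext_iff] using hab
      have h2 : (a : ℝ) + 2 = (b : ℝ) + 2 := inv_injective h1
      have h3 : (a : ℝ) = b := by linarith
      exact_mod_cast h3
    · intro k
      have hk : ‖((((k : ℝ) + 2)⁻¹ : ℝ) * (1 : ℂ))‖ < 1 := by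
        have he : ‖((((k : ℝ) + 2)⁻¹ : ℝ) * (1 : ℂ))‖ = ((k : ℝ) + 2)⁻¹ := by
          rw [norm_mul, norm_one, mul_one, Complex.norm_real, Real.norm_eq_abs,
            abs_of_pos (show (0:ℝ) < ((k : ℝ) + 2)⁻¹ by positivity)]
        rw [he]
        have : (1:ℝ) < (k : ℝ) + 2 := by
          have := Nat.cast_nonneg (α := ℝ) k; linarith
        exact inv_lt_one_of_one_lt₀ this
      set z := ((((k : ℝ) + 2)⁻¹ : ℝ) * (1 : ℂ)) with hzdef
      have hne : (1 : ℂ) - z * (starRingEnd ℂ) z ≠ 0 := by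
        intro h
        have : z * (starRingEnd ℂ) z = 1 := by linear_combination -h
        rw [Complex.mul_conj] at this
        have h2 : Complex.normSq z = 1 := by exact_mod_cast this
        have h3 : Complex.normSq z < 1 := by
          rw [Complex.normSq_eq_norm_sq]
          nlinarith [norm_nonneg z]
        linarith
      have := heval z
      rcases mul_eq_zero.mp this with h | h
      · exact h
      · exact absurd h hne
  have hco : P.coeff i = g i := by
    rw [hP, Polynomial.finset_sum_coeff]
    simp only [Polynomial.coeff_C_mul, Polynomial.coeff_X_pow, mul_ite, mul_one, mul_zero]
    rw [Finset.sum_ite_eq s i g]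
    simp [hi]
  rw [hPz] at hco
  simpa using hco.symm

/-- The space of functions `w : ℂ → ℂ` continuous on the closed unit disk, `C^∞` on the
open disk, satisfying `∂̄² w = 0` on the open disk and vanishing on the unit circle, is
not finite-dimensional (as a complex vector space). -/
theorem stmt_18 :
    ¬ FiniteDimensional ℂ
      (Submodule.span ℂ {w : ℂ → ℂ |
        ContinuousOn w (closedBall (0 : ℂ) 1) ∧
        ContDiffOn ℝ (⊤ : ℕ∞) w (ball (0 : ℂ) 1) ∧
        (∀ z ∈ ball (0 : ℂ) 1, wirtingerBar (wirtingerBar w) z = 0) ∧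
        (∀ z : ℂ, ‖z‖ = 1 → w z = 0)}) := by
  intro hfin
  set S := {w : ℂ → ℂ |
        ContinuousOn w (closedBall (0 : ℂ) 1) ∧
        ContDiffOn ℝ (⊤ : ℕ∞) w (ball (0 : ℂ) 1) ∧
        (∀ z ∈ ball (0 : ℂ) 1, wirtingerBar (wirtingerBar w) z = 0) ∧
        (∀ z : ℂ, ‖z‖ = 1 → w z = 0)} with hS
  have hv : LinearIndependent ℂ
      (fun n : ℕ => (⟨fn n, Submodule.subset_span (mem_fn n)⟩ : Submodule.span ℂ S)) := by
    apply LinearIndependent.of_comp (Submodule.span ℂ S).subtype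
    exact linIndep_fn
  exact Module.Finite.not_linearIndependent_of_infinite _ hv
end
end

section
/- Let ξ₁, ξ₂ ∈ ℝ with (ξ₁, ξ₂) ≠ (0,0), and let v = (v₁, v₂) : ℝ → ℂ² be a C¹ function satisfying the ODE system v₁'(t) = (ξ₂ − i ξ₁)·v₂(t) and v₂'(t) = (i ξ₁ + ξ₂)·v₁(t) for all t ∈ ℝ. If v(t) → 0 as t → −∞ and v₁(0) = 0, then v is identically zero. -/
noncomputable section
open Filter

/-- Uniqueness for the scalar linear ODE `f' = c f` over ℝ → ℂ. -/
lemma ode_exp_aux (c : ℂ) (f : ℝ → ℂ) (hf : Differentiable ℝ f)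
    (h : ∀ t : ℝ, deriv f t = c * f t) : ∀ t : ℝ, f t = f 0 * Complex.exp (c * t) := by
  have hexp : ∀ t : ℝ, HasDerivAt (fun s : ℝ => Complex.exp (-c * s))
      (Complex.exp (-c * t) * (-c)) t := by
    intro t
    have h1 : HasDerivAt (fun s : ℝ => (s : ℂ)) 1 t := by
      simpa using (hasDerivAt_id t).ofReal_comp
    have h2 : HasDerivAt (fun s : ℝ => -c * (s : ℂ)) (-c) t := by
      simpa using h1.const_mul (-c)
    simpa using h2.cexp
  have key : ∀ t : ℝ, f t * Complex.exp (-c * t) = f 0 := by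
    intro t
    have hconst : ∀ s : ℝ, deriv (fun u : ℝ => f u * Complex.exp (-c * u)) s = 0 := by
      intro s
      have hfd : HasDerivAt f (c * f s) s := by
        have := (hf s).hasDerivAt
        rwa [h s] at this
      have := hfd.mul (hexp s)
      have h0 : c * f s * Complex.exp (-c * s) + f s * (Complex.exp (-c * s) * (-c)) = 0 := by
        ring
      exact this.deriv.trans h0
    have hd : Differentiable ℝ (fun u : ℝ => f u * Complex.exp (-c * u)) := by
      intro s
      have hfd : HasDerivAt f (c * f s) s := by
        have := (hf s).hasDerivAt
        rwa [h s] at this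
      exact (hfd.mul (hexp s)).differentiableAt
    have := is_const_of_deriv_eq_zero hd hconst t 0
    simpa using this
  intro t
  have := key t
  have he : Complex.exp (-c * t) * Complex.exp (c * t) = 1 := by
    rw [← Complex.exp_add]; ring_nf; exact Complex.exp_zero
  calc f t = f t * (Complex.exp (-c * t) * Complex.exp (c * t)) := by rw [he, mul_one]
    _ = (f t * Complex.exp (-c * t)) * Complex.exp (c * t) := by ring
    _ = f 0 * Complex.exp (c * t) := by rw [this]

/-- The complementing (Lopatinski–Shapiro) condition for the boundary condition
`u₁ = 0` for the Witten equation: a `C¹` solution `(v₁, v₂)` of the ODE system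
`v₁' = (ξ₂ − iξ₁) v₂`, `v₂' = (iξ₁ + ξ₂) v₁` with nonzero real tangential frequency
`(ξ₁, ξ₂)`, decaying as `t → −∞` and with `v₁(0) = 0`, is identically zero. -/
theorem stmt_19 (ξ₁ ξ₂ : ℝ) (hξ : (ξ₁, ξ₂) ≠ (0, 0))
    (v₁ v₂ : ℝ → ℂ) (hv₁ : ContDiff ℝ 1 v₁) (hv₂ : ContDiff ℝ 1 v₂)
    (hode₁ : ∀ t : ℝ, deriv v₁ t = ((ξ₂ : ℂ) - Complex.I * (ξ₁ : ℂ)) * v₂ t)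
    (hode₂ : ∀ t : ℝ, deriv v₂ t = (Complex.I * (ξ₁ : ℂ) + (ξ₂ : ℂ)) * v₁ t)
    (hdecay₁ : Tendsto v₁ atBot (nhds 0)) (hdecay₂ : Tendsto v₂ atBot (nhds 0))
    (hbc : v₁ 0 = 0) :
    ∀ t : ℝ, v₁ t = 0 ∧ v₂ t = 0 := by
  set a : ℂ := (ξ₂ : ℂ) - Complex.I * (ξ₁ : ℂ) with ha
  set b : ℂ := Complex.I * (ξ₁ : ℂ) + (ξ₂ : ℂ) with hb
  have hξsq : (0:ℝ) < ξ₁ ^ 2 + ξ₂ ^ 2 := by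
    rcases (not_and_or.mp (by simpa [Prod.ext_iff] using hξ)) with h | h
    · positivity
    · positivity
  set lam : ℝ := Real.sqrt (ξ₁ ^ 2 + ξ₂ ^ 2) with hlam
  have hlam_pos : 0 < lam := Real.sqrt_pos.mpr hξsq
  have hlam_sq : (lam : ℂ) * (lam : ℂ) = a * b := by
    have hr : lam * lam = ξ₁ ^ 2 + ξ₂ ^ 2 := Real.mul_self_sqrt hξsq.le
    have h2 : ((lam : ℂ)) * (lam : ℂ) = ((ξ₁ : ℂ)) ^ 2 + ((ξ₂ : ℂ)) ^ 2 := by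
      exact_mod_cast congrArg (Complex.ofReal) hr
    rw [h2, ha, hb]
    have hI : Complex.I ^ 2 = -1 := Complex.I_sq
    linear_combination ((ξ₁:ℂ)^2) * hI
  have ha_ne : a ≠ 0 := by
    intro h0
    have hre : ((ξ₂ : ℂ) - Complex.I * (ξ₁ : ℂ)).re = 0 := by rw [← ha, h0]; simp
    have him : ((ξ₂ : ℂ) - Complex.I * (ξ₁ : ℂ)).im = 0 := by rw [← ha, h0]; simp
    simp at hre him
    exact hξ (by simp [him, hre])
  have hdv₁ : Differentiable ℝ v₁ := hv₁.differentiable one_ne_zero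
  have hdv₂ : Differentiable ℝ v₂ := hv₂.differentiable one_ne_zero
  -- h = λ v₁ - a v₂ satisfies h' = -λ h
  set H : ℝ → ℂ := fun t => (lam : ℂ) * v₁ t - a * v₂ t with hH
  set G : ℝ → ℂ := fun t => (lam : ℂ) * v₁ t + a * v₂ t with hG
  have hHd : Differentiable ℝ H := (hdv₁.const_mul _).sub (hdv₂.const_mul _)
  have hGd : Differentiable ℝ G := (hdv₁.const_mul _).add (hdv₂.const_mul _)
  have hderivH : ∀ t : ℝ, deriv H t = (-(lam : ℂ)) * H t := by
    intro t
    have h1 : HasDerivAt v₁ (a * v₂ t) t := by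
      have := (hdv₁ t).hasDerivAt; rwa [hode₁ t] at this
    have h2 : HasDerivAt v₂ (b * v₁ t) t := by
      have := (hdv₂ t).hasDerivAt; rwa [hode₂ t] at this
    have h3 : HasDerivAt H ((lam : ℂ) * (a * v₂ t) - a * (b * v₁ t)) t :=
      (h1.const_mul _).sub (h2.const_mul _)
    rw [h3.deriv, hH]
    linear_combination (v₁ t) * hlam_sq
  have hderivG : ∀ t : ℝ, deriv G t = (lam : ℂ) * G t := by
    intro t
    have h1 : HasDerivAt v₁ (a * v₂ t) t := by
      have := (hdv₁ t).hasDerivAt; rwa [hode₁ t] at this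
    have h2 : HasDerivAt v₂ (b * v₁ t) t := by
      have := (hdv₂ t).hasDerivAt; rwa [hode₂ t] at this
    have h3 : HasDerivAt G ((lam : ℂ) * (a * v₂ t) + a * (b * v₁ t)) t :=
      (h1.const_mul _).add (h2.const_mul _)
    rw [h3.deriv, hG]
    linear_combination (-(v₁ t)) * hlam_sq
  have hHsol := ode_exp_aux (-(lam : ℂ)) H hHd hderivH
  have hGsol := ode_exp_aux ((lam : ℂ)) G hGd hderivG
  -- H tends to 0 at -∞
  have hHtend : Tendsto H atBot (nhds 0) := by
    have := ((hdecay₁.const_mul ((lam : ℂ))).sub (hdecay₂.const_mul a))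
    simpa using this
  -- exp(λ t) → 0 at -∞
  have hexptend : Tendsto (fun t : ℝ => Complex.exp ((lam : ℂ) * t)) atBot (nhds 0) := by
    rw [tendsto_zero_iff_norm_tendsto_zero]
    have : ∀ t : ℝ, ‖Complex.exp ((lam : ℂ) * t)‖ = Real.exp (lam * t) := by
      intro t
      rw [Complex.norm_exp]
      norm_num
    simp_rw [this]
    exact Real.tendsto_exp_atBot.comp (tendsto_id.const_mul_atBot hlam_pos)
  -- H 0 = 0
  have hH0 : H 0 = 0 := by
    have hconst : ∀ t : ℝ, H t * Complex.exp ((lam : ℂ) * t) = H 0 := by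
      intro t
      have := hHsol t
      rw [this]
      rw [mul_assoc, ← Complex.exp_add]
      ring_nf
      simp
    have h1 : Tendsto (fun t : ℝ => H t * Complex.exp ((lam : ℂ) * t)) atBot (nhds 0) := by
      simpa using hHtend.mul hexptend
    have h2 : Tendsto (fun _ : ℝ => H 0) atBot (nhds (H 0)) := tendsto_const_nhds
    exact tendsto_nhds_unique h2 ((tendsto_congr hconst).mp h1)
  have hHzero : ∀ t : ℝ, H t = 0 := by
    intro t; rw [hHsol t, hH0, zero_mul]
  -- G 0 = 0
  have hG0 : G 0 = 0 := by
    have h1 : (lam : ℂ) * v₁ 0 - a * v₂ 0 = 0 := hHzero 0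
    show (lam : ℂ) * v₁ 0 + a * v₂ 0 = 0
    rw [hbc] at h1 ⊢
    linear_combination -h1
  have hGzero : ∀ t : ℝ, G t = 0 := by
    intro t; rw [hGsol t, hG0, zero_mul]
  intro t
  have h1 : (lam : ℂ) * v₁ t - a * v₂ t = 0 := hHzero t
  have h2 : (lam : ℂ) * v₁ t + a * v₂ t = 0 := hGzero t
  have hlam_ne : (lam : ℂ) ≠ 0 := by
    exact_mod_cast Complex.ofReal_ne_zero.mpr hlam_pos.ne'
  constructor
  · have : (lam : ℂ) * v₁ t = 0 := by linear_combination (h1 + h2) / 2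
    exact (mul_eq_zero.mp this).resolve_left hlam_ne
  · have : a * v₂ t = 0 := by linear_combination (h2 - h1) / 2
    exact (mul_eq_zero.mp this).resolve_left ha_ne
end
end
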